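/- arXiv:2003.02623 — 5 statements merged into one kernel-verified Lean document; each statement's English description precedes it below -/
import Mathlib

section
/- For every y_{-k}^k ∈ ℝ^{2k+1} with p(y_{-k}^k) > 0 and p(y_{-0}) > 0, and every a ∈ A, one has P(X_0 = a | y_{-k}^k) = (p(y_{-0})/p(y_{-k}^k)) · (Σ_{z∈A} P(Z_0 = z | y_{-0}) · Π^{-1}(z,a)) · f_a(y_0); in particular, the vector (P(X_0 = a | y_{-k}^k))_{a∈A} is proportional to the componentwise product of the row vector P(Z_0 = · | y_{-0}) · Π^{-1} with the density vector (f_a(y_0))_{a∈A}. -/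
open MeasureTheory Finset

noncomputable section
namespace GenCUDE

/-- The center index of a `(2k+1)`-tuple (0-indexed position `k`). -/
def center (k : ℕ) : Fin (2*k+1) := ⟨k, by omega⟩

/-- Remove the center coordinate of a `(2k+1)`-tuple, yielding the context (a `2k`-tuple). -/
def dropCenter {α : Type*} (k : ℕ) (y : Fin (2*k+1) → α) : Fin (2*k) → α :=
  fun i => y ((center k).succAbove i)

/-- `p(y_{-k}^k)`: the joint output density of the full `(2k+1)`-tuple. -/
def pFull {M k : ℕ} (f : Fin M → ℝ → ℝ) (P : (Fin (2*k+1) → Fin M) → ℝ)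
    (y : Fin (2*k+1) → ℝ) : ℝ :=
  ∑ u : Fin (2*k+1) → Fin M, P u * ∏ j, f (u j) (y j)

/-- `p(y_{-0})`: the output density of the context. -/
def pCtx {M k : ℕ} (f : Fin M → ℝ → ℝ) (P : (Fin (2*k+1) → Fin M) → ℝ)
    (c : Fin (2*k) → ℝ) : ℝ :=
  ∑ u : Fin (2*k+1) → Fin M, P u * ∏ i, f (dropCenter k u i) (c i)

/-- `p(a, y_{-k}^k)`. -/
def pJoint {M k : ℕ} (f : Fin M → ℝ → ℝ) (P : (Fin (2*k+1) → Fin M) → ℝ)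
    (a : Fin M) (y : Fin (2*k+1) → ℝ) : ℝ :=
  ∑ u : Fin (2*k+1) → Fin M,
    (if u (center k) = a then P u * ∏ j, f (u j) (y j) else 0)

/-- `p(a, y_{-0})`. -/
def pJointCtx {M k : ℕ} (f : Fin M → ℝ → ℝ) (P : (Fin (2*k+1) → Fin M) → ℝ)
    (a : Fin M) (c : Fin (2*k) → ℝ) : ℝ :=
  ∑ u : Fin (2*k+1) → Fin M,
    (if u (center k) = a then P u * ∏ i, f (dropCenter k u i) (c i) else 0)

/-- `P(X_0 = · | y_{-k}^k)`. -/
def postFull {M k : ℕ} (f : Fin M → ℝ → ℝ) (P : (Fin (2*k+1) → Fin M) → ℝ)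
    (y : Fin (2*k+1) → ℝ) : Fin M → ℝ :=
  fun a => pJoint f P a y / pFull f P y

/-- `P(X_0 = · | y_{-0})`. -/
def postCtx {M k : ℕ} (f : Fin M → ℝ → ℝ) (P : (Fin (2*k+1) → Fin M) → ℝ)
    (c : Fin (2*k) → ℝ) : Fin M → ℝ :=
  fun a => pJointCtx f P a c / pCtx f P c

/-- `P(Z_0 = · | y_{-0}) = Σ_a P(X_0=a | y_{-0}) Π(a,·)`. -/
def PZ {M k : ℕ} (f : Fin M → ℝ → ℝ) (P : (Fin (2*k+1) → Fin M) → ℝ)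
    (Pi : Matrix (Fin M) (Fin M) ℝ) (c : Fin (2*k) → ℝ) : Fin M → ℝ :=
  fun z => ∑ a, postCtx f P c a * Pi a z

/-- The approximate posterior `P̂(X_0 = · | y_{-k}^k)` built from the network output `g`. -/
def postHat {M k : ℕ} (f : Fin M → ℝ → ℝ) (P : (Fin (2*k+1) → Fin M) → ℝ)
    (Pi : Matrix (Fin M) (Fin M) ℝ) (g : (Fin (2*k) → ℝ) → Fin M → ℝ)
    (y : Fin (2*k+1) → ℝ) : Fin M → ℝ :=
  fun a => (pCtx f P (dropCenter k y) / pFull f P y)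
      * (∑ z, g (dropCenter k y) z * Pi⁻¹ z a) * f a (y (center k))

/-- `b` is a Bayes response with respect to (the not necessarily normalized vector) `v`. -/
def IsBayes {M : ℕ} (Λ : Matrix (Fin M) (Fin M) ℝ) (v : Fin M → ℝ) (b : Fin M) : Prop :=
  ∀ c : Fin M, ∑ a, Λ a b * v a ≤ ∑ a, Λ a c * v a

/-- Single-letter risk `R(h)` of a sliding-window rule `h` under `P ⊗ C`. -/
def risk {M k : ℕ} (f : Fin M → ℝ → ℝ) (P : (Fin (2*k+1) → Fin M) → ℝ)
    (Λ : Matrix (Fin M) (Fin M) ℝ) (h : (Fin (2*k+1) → ℝ) → Fin M) : ℝ :=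
  ∑ u : Fin (2*k+1) → Fin M,
    P u * ∫ y : Fin (2*k+1) → ℝ, Λ (u (center k)) (h y) * ∏ j, f (u j) (y j)

/-- Extend a `Fin n`-indexed sequence to `ℕ` by zero. -/
def ext {n : ℕ} (y : Fin n → ℝ) : ℕ → ℝ := fun m => if h : m < n then y ⟨m, h⟩ else 0

/-- The window `y_{i-k}^{i+k}` (0-indexed center `i`). -/
def window (k : ℕ) (y : ℕ → ℝ) (i : ℕ) : Fin (2*k+1) → ℝ := fun j => y (i - k + j.val)

/-- The empirical distribution of `(2k+1)`-blocks of `x^n` (0-indexed positions `0,…,n-1`). -/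
def empDist (M n k : ℕ) (x : ℕ → Fin M) : (Fin (2*k+1) → Fin M) → ℝ :=
  fun u => (((Finset.Ico k (n - k)).filter
      fun i => ∀ j : Fin (2*k+1), x (i - k + j.val) = u j).card : ℝ) / ((n - 2*k : ℕ) : ℝ)

/-- The law of `Y^n`: independent coordinates, `Y_i` with density `f_{x_i}`. -/
def lawSeq {M : ℕ} (n : ℕ) (f : Fin M → ℝ → ℝ) (x : ℕ → Fin M) : Measure (Fin n → ℝ) :=
  Measure.pi fun i : Fin n => volume.withDensity fun t => ENNReal.ofReal (f (x i.val) t)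

/-- The joint law of the `(2k+1)` noisy outputs under `P ⊗ C`. -/
def lawBlock {M k : ℕ} (f : Fin M → ℝ → ℝ) (P : (Fin (2*k+1) → Fin M) → ℝ) :
    Measure (Fin (2*k+1) → ℝ) :=
  ∑ u : Fin (2*k+1) → Fin M, ENNReal.ofReal (P u) •
    Measure.pi fun j => volume.withDensity fun t => ENNReal.ofReal (f (u j) t)

/-- The average loss of the sliding-window rule `h` on `(x^n, y^n)`. -/
def avgLoss {M : ℕ} (n k : ℕ) (Λ : Matrix (Fin M) (Fin M) ℝ) (x : ℕ → Fin M)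
    (h : (Fin (2*k+1) → ℝ) → Fin M) (y : Fin n → ℝ) : ℝ :=
  (((n - 2*k : ℕ) : ℝ))⁻¹ * ∑ i ∈ Finset.Ico k (n - k), Λ (x i) (h (window k (ext y) i))


/-- Lemma 1 of the paper: for every full tuple `y` with positive density
(both for the full tuple and its context) and every symbol `a`,
`P(X_0=a | y_{-k}^k) = (p(y_{-0})/p(y_{-k}^k)) · (Σ_z P(Z_0=z | y_{-0}) Π⁻¹(z,a)) · f_a(y_0)`;
in particular the posterior vector is proportional to
`[P(Z_0 | y_{-0}) · Π⁻¹] ⊙ f_{X_0}(y_0)`. -/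
theorem statement0
    (M k : ℕ) (hM : 2 ≤ M) (hk : 1 ≤ k)
    (f : Fin M → ℝ → ℝ) (hf_meas : ∀ a, Measurable (f a))
    (hf_nonneg : ∀ a t, 0 ≤ f a t) (hf_int : ∀ a, ∫ t, f a t = 1)
    (Q : ℝ → Fin M) (hQ : Measurable Q)
    (Pi : Matrix (Fin M) (Fin M) ℝ)
    (hPi : ∀ a z, Pi a z = ∫ t in {s : ℝ | Q s = z}, f a t)
    (hPi_inv : IsUnit Pi.det)
    (P : (Fin (2*k+1) → Fin M) → ℝ)
    (hP_nonneg : ∀ u, 0 ≤ P u) (hP_sum : ∑ u, P u = 1)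
    (y : Fin (2*k+1) → ℝ)
    (hy : 0 < pFull f P y) (hyc : 0 < pCtx f P (dropCenter k y))
    (a : Fin M) :
    postFull f P y a
      = (pCtx f P (dropCenter k y) / pFull f P y)
        * (∑ z, PZ f P Pi (dropCenter k y) z * Pi⁻¹ z a) * f a (y (center k)) := by
  have key : pJoint f P a y = pJointCtx f P a (dropCenter k y) * f a (y (center k)) := by
    unfold pJoint pJointCtx
    rw [Finset.sum_mul]
    refine Finset.sum_congr rfl fun u _ => ?_
    by_cases h : u (center k) = a
    · simp only [h, if_true]
      rw [Fin.prod_univ_succAbove (fun j => f (u j) (y j)) (center k)]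
      simp only [dropCenter, h]
      ring
    · simp [h]
  have inv : ∀ b : Fin M, ∑ z, Pi b z * Pi⁻¹ z a = if b = a then 1 else 0 := by
    intro b
    have h1 := Matrix.mul_nonsing_inv Pi hPi_inv
    have h2 := congrFun (congrFun h1 b) a
    simpa [Matrix.mul_apply, Matrix.one_apply] using h2
  have hz : ∑ z, PZ f P Pi (dropCenter k y) z * Pi⁻¹ z a
      = postCtx f P (dropCenter k y) a := by
    unfold PZ
    calc ∑ z, (∑ b, postCtx f P (dropCenter k y) b * Pi b z) * Pi⁻¹ z a
        = ∑ b, postCtx f P (dropCenter k y) b * ∑ z, Pi b z * Pi⁻¹ z a := by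
          simp only [Finset.sum_mul, Finset.mul_sum, mul_assoc]
          rw [Finset.sum_comm]
      _ = postCtx f P (dropCenter k y) a := by
          simp [inv]
  rw [hz]
  unfold postFull postCtx
  rw [key]
  field_simp

end GenCUDE
end
end

section
/- For every y_{-k}^k ∈ ℝ^{2k+1} with p(y_{-k}^k) > 0 and p(y_{-0}) > 0, and every a ∈ A, one has P(X_0 = a | y_{-k}^k) − P̂(X_0 = a | y_{-k}^k) = (p(y_{-0})/p(y_{-k}^k)) · (Σ_{z∈A} (P(Z_0 = z | y_{-0}) − g(y_{-0})(z)) · Π^{-1}(z,a)) · f_a(y_0). -/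
open MeasureTheory Finset

noncomputable section
namespace GenCUDE

/-- pointwise error identity between the true posterior and the
approximate posterior `P̂` built from the network output `g`:
`P(X_0=a|y_{-k}^k) − P̂(X_0=a|y_{-k}^k)
  = (p(y_{-0})/p(y_{-k}^k)) · (Σ_z (P(Z_0=z|y_{-0}) − g(y_{-0})(z)) Π⁻¹(z,a)) · f_a(y_0)`. -/
theorem statement2
    (M k : ℕ) (hM : 2 ≤ M) (hk : 1 ≤ k)
    (f : Fin M → ℝ → ℝ) (hf_meas : ∀ a, Measurable (f a))
    (hf_nonneg : ∀ a t, 0 ≤ f a t) (hf_int : ∀ a, ∫ t, f a t = 1)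
    (Q : ℝ → Fin M) (hQ : Measurable Q)
    (Pi : Matrix (Fin M) (Fin M) ℝ)
    (hPi : ∀ a z, Pi a z = ∫ t in {s : ℝ | Q s = z}, f a t)
    (hPi_inv : IsUnit Pi.det)
    (P : (Fin (2*k+1) → Fin M) → ℝ)
    (hP_nonneg : ∀ u, 0 ≤ P u) (hP_sum : ∑ u, P u = 1)
    (g : (Fin (2*k) → ℝ) → Fin M → ℝ) (hg_meas : Measurable g)
    (hg_simplex : ∀ c, (∀ z, 0 ≤ g c z) ∧ ∑ z, g c z = 1)
    (y : Fin (2*k+1) → ℝ)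
    (hy : 0 < pFull f P y) (hyc : 0 < pCtx f P (dropCenter k y))
    (a : Fin M) :
    postFull f P y a - postHat f P Pi g y a
      = (pCtx f P (dropCenter k y) / pFull f P y)
        * (∑ z, (PZ f P Pi (dropCenter k y) z - g (dropCenter k y) z) * Pi⁻¹ z a)
        * f a (y (center k)) := by
  set c := dropCenter k y with hc
  -- product split over center coordinate
  have hprod : ∀ u : Fin (2*k+1) → Fin M, (∏ j, f (u j) (y j))
      = f (u (center k)) (y (center k)) * ∏ i, f (dropCenter k u i) (c i) := by
    intro u
    exact Fin.prod_univ_succAbove (fun j => f (u j) (y j)) (center k)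
  have hJoint : pJoint f P a y = pJointCtx f P a c * f a (y (center k)) := by
    unfold pJoint pJointCtx
    rw [Finset.sum_mul]
    refine Finset.sum_congr rfl fun u _ => ?_
    by_cases h : u (center k) = a
    · rw [if_pos h, if_pos h, hprod u, h]; ring
    · simp [h]
  -- Π Π⁻¹ = 1
  have hinv : (∑ z, PZ f P Pi c z * Pi⁻¹ z a) = postCtx f P c a := by
    unfold PZ
    simp_rw [Finset.sum_mul]
    rw [Finset.sum_comm]
    have : ∀ b : Fin M, (∑ z, postCtx f P c b * Pi b z * Pi⁻¹ z a)
        = postCtx f P c b * (Pi * Pi⁻¹) b a := by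
      intro b
      rw [Matrix.mul_apply, Finset.mul_sum]
      refine Finset.sum_congr rfl fun z _ => by ring
    calc (∑ b, ∑ z, postCtx f P c b * Pi b z * Pi⁻¹ z a)
        = ∑ b, postCtx f P c b * (Pi * Pi⁻¹) b a := by
          exact Finset.sum_congr rfl fun b _ => this b
      _ = postCtx f P c a := by
          rw [Matrix.mul_nonsing_inv Pi hPi_inv]
          simp [Matrix.one_apply]
  have hpc : postCtx f P c a * pCtx f P c = pJointCtx f P a c := by
    unfold postCtx
    field_simp
  have hsplit : (∑ z, (PZ f P Pi c z - g c z) * Pi⁻¹ z a)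
      = postCtx f P c a - ∑ z, g c z * Pi⁻¹ z a := by
    rw [← hinv, ← Finset.sum_sub_distrib]
    exact Finset.sum_congr rfl fun z _ => by ring
  unfold postFull postHat
  rw [hJoint, hsplit, ← hpc]
  field_simp
  ring

end GenCUDE
end
end

section
/- Under Assumption 2, ∫_{{y ∈ ℝ^{2k+1} : p(y_{-k}^k) > 0}} ‖P(X_0 | y_{-k}^k) − P̂(X_0 | y_{-k}^k)‖₁ · p(y_{-k}^k) dy_{-k}^k ≤ ε*. (Here p(y_{-k}^k) > 0 implies p(y_{-0}) > 0, so both posterior vectors are defined on the domain of integration.) -/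
open MeasureTheory Finset

noncomputable section
namespace GenCUDE

/-! Since `p(a, y) = p(a, y_{-0}) f_a(y_0)` and `P(X_0 | y_{-0}) = P(Z_0 | y_{-0}) Π⁻¹`, the error of
`P̂` at the letter `a` is `p(y_{-0}) f_a(y_0) / p(y) · ⟪P(Z_0 | y_{-0}) − g(y_{-0}), π_a⁻¹⟫`.
By Hölder and Assumption 2 the inner product is at most `ε′ ‖π_a⁻¹‖₂`. After multiplying by `p(y)`
the remaining weight `p(y_{-0}) f_a(y_0)` is the density of the block with `X_0` replaced by `a`,
so it integrates to `1`, and summing over `a` gives `ε*`. -/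

lemma abs_sum_mul_le_sum_abs_mul_sqrt {ι : Type*} [Fintype ι] (d v : ι → ℝ) :
    |∑ z, d z * v z| ≤ (∑ z, |d z|) * Real.sqrt (∑ z, v z ^ 2) := by
  calc |∑ z, d z * v z| ≤ ∑ z, |d z| * |v z| := by
        simpa only [abs_mul] using Finset.abs_sum_le_sum_abs (fun z => d z * v z) Finset.univ
    _ ≤ ∑ z, |d z| * Real.sqrt (∑ z', v z' ^ 2) := by
        gcongr with z
        rw [← Real.sqrt_sq_eq_abs]
        exact Real.sqrt_le_sqrt (Finset.single_le_sum (fun z' _ => sq_nonneg (v z'))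
          (Finset.mem_univ z))
    _ = (∑ z, |d z|) * Real.sqrt (∑ z, v z ^ 2) := by rw [Finset.sum_mul]

section Densities

variable {M k : ℕ} {f : Fin M → ℝ → ℝ} {P : (Fin (2*k+1) → Fin M) → ℝ}

lemma prod_eq_mul_prod_dropCenter (f : Fin M → ℝ → ℝ) (u : Fin (2*k+1) → Fin M)
    (y : Fin (2*k+1) → ℝ) :
    ∏ j, f (u j) (y j)
      = f (u (center k)) (y (center k)) * ∏ i, f (dropCenter k u i) (dropCenter k y i) :=
  Fin.prod_univ_succAbove (fun j => f (u j) (y j)) (center k)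

lemma pJoint_eq_pJointCtx_mul (f : Fin M → ℝ → ℝ) (P : (Fin (2*k+1) → Fin M) → ℝ)
    (a : Fin M) (y : Fin (2*k+1) → ℝ) :
    pJoint f P a y = pJointCtx f P a (dropCenter k y) * f a (y (center k)) := by
  rw [pJoint, pJointCtx, Finset.sum_mul]
  refine Finset.sum_congr rfl fun u _ => ?_
  split_ifs with h
  · rw [prod_eq_mul_prod_dropCenter, h]; ring
  · ring

lemma pCtx_nonneg (hf : ∀ a t, 0 ≤ f a t) (hP : ∀ u, 0 ≤ P u) (c : Fin (2*k) → ℝ) :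
    0 ≤ pCtx f P c :=
  Finset.sum_nonneg fun u _ => mul_nonneg (hP u) (Finset.prod_nonneg fun _ _ => hf _ _)

lemma pFull_nonneg (hf : ∀ a t, 0 ≤ f a t) (hP : ∀ u, 0 ≤ P u) (y : Fin (2*k+1) → ℝ) :
    0 ≤ pFull f P y :=
  Finset.sum_nonneg fun u _ => mul_nonneg (hP u) (Finset.prod_nonneg fun _ _ => hf _ _)

lemma pCtx_pos_of_pFull_pos (hf : ∀ a t, 0 ≤ f a t) (hP : ∀ u, 0 ≤ P u)
    {y : Fin (2*k+1) → ℝ} (hy : 0 < pFull f P y) : 0 < pCtx f P (dropCenter k y) := by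
  refine (pCtx_nonneg hf hP _).lt_of_ne fun hc => hy.ne' ?_
  have hterm := (Finset.sum_eq_zero_iff_of_nonneg fun u _ =>
    mul_nonneg (hP u) (Finset.prod_nonneg fun _ _ => hf _ _)).1 hc.symm
  refine Finset.sum_eq_zero fun u hu => ?_
  rw [prod_eq_mul_prod_dropCenter, mul_left_comm, hterm u hu, mul_zero]

lemma measurable_pFull (hf : ∀ a, Measurable (f a)) : Measurable (pFull f P) := by
  unfold pFull
  fun_prop

lemma pCtx_mul_eq_sum_update (f : Fin M → ℝ → ℝ) (P : (Fin (2*k+1) → Fin M) → ℝ)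
    (a : Fin M) (y : Fin (2*k+1) → ℝ) :
    pCtx f P (dropCenter k y) * f a (y (center k))
      = ∑ u, P u * ∏ j, f (Function.update u (center k) a j) (y j) := by
  rw [pCtx, Finset.sum_mul]
  refine Finset.sum_congr rfl fun u _ => ?_
  have hdrop : dropCenter k (Function.update u (center k) a) = dropCenter k u :=
    funext fun i => Function.update_of_ne (Fin.succAbove_ne _ _) _ _
  rw [prod_eq_mul_prod_dropCenter f (Function.update u (center k) a) y, Function.update_self,
    hdrop]
  ring

lemma integral_prod_density (hf_int : ∀ a, ∫ t, f a t = 1) (w : Fin (2*k+1) → Fin M) :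
    ∫ y : Fin (2*k+1) → ℝ, ∏ j, f (w j) (y j) = 1 := by
  simp [integral_fintype_prod_volume_eq_prod (fun j t => f (w j) t), hf_int]

lemma integrable_prod_density (hf_int : ∀ a, ∫ t, f a t = 1) (w : Fin (2*k+1) → Fin M) :
    Integrable fun y : Fin (2*k+1) → ℝ => ∏ j, f (w j) (y j) :=
  Integrable.of_integral_ne_zero (by rw [integral_prod_density hf_int]; exact one_ne_zero)

lemma integrable_pCtx_mul (hf_int : ∀ a, ∫ t, f a t = 1) (a : Fin M) :
    Integrable fun y => pCtx f P (dropCenter k y) * f a (y (center k)) := by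
  simp_rw [pCtx_mul_eq_sum_update]
  exact integrable_finsetSum _ fun u _ => (integrable_prod_density hf_int _).const_mul _

lemma integral_pCtx_mul (hf_int : ∀ a, ∫ t, f a t = 1) (hP_sum : ∑ u, P u = 1) (a : Fin M) :
    ∫ y, pCtx f P (dropCenter k y) * f a (y (center k)) = 1 := by
  simp_rw [pCtx_mul_eq_sum_update]
  rw [integral_finsetSum _ fun u _ => (integrable_prod_density hf_int _).const_mul _]
  simp_rw [integral_const_mul, integral_prod_density hf_int, mul_one, hP_sum]

end Densities

section Posterior

open Matrix

variable {M k : ℕ} {f : Fin M → ℝ → ℝ} {P : (Fin (2*k+1) → Fin M) → ℝ}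
  {Pi : Matrix (Fin M) (Fin M) ℝ}

lemma PZ_vecMul_inv (hPi : IsUnit Pi.det) (c : Fin (2*k) → ℝ) :
    PZ f P Pi c ᵥ* Pi⁻¹ = postCtx f P c := by
  rw [show PZ f P Pi c = postCtx f P c ᵥ* Pi from rfl, Matrix.vecMul_vecMul,
    Matrix.mul_nonsing_inv _ hPi, Matrix.vecMul_one]

lemma postFull_sub_postHat (hPi : IsUnit Pi.det) (g : (Fin (2*k) → ℝ) → Fin M → ℝ)
    {y : Fin (2*k+1) → ℝ} (hc : pCtx f P (dropCenter k y) ≠ 0) (a : Fin M) :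
    postFull f P y a - postHat f P Pi g y a
      = pCtx f P (dropCenter k y) * f a (y (center k)) / pFull f P y
          * ((PZ f P Pi (dropCenter k y) - g (dropCenter k y)) ᵥ* Pi⁻¹) a := by
  have hpost : pJointCtx f P a (dropCenter k y)
      = postCtx f P (dropCenter k y) a * pCtx f P (dropCenter k y) :=
    (div_mul_cancel₀ _ hc).symm
  rw [Matrix.sub_vecMul, PZ_vecMul_inv hPi, postFull, postHat, pJoint_eq_pJointCtx_mul, hpost]
  simp only [_root_.Pi.sub_apply, Matrix.vecMul, dotProduct]
  ring

lemma sum_abs_postFull_sub_postHat_mul_le (hf : ∀ a t, 0 ≤ f a t) (hP : ∀ u, 0 ≤ P u)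
    (hPi : IsUnit Pi.det) {g : (Fin (2*k) → ℝ) → Fin M → ℝ} {ε' : ℝ}
    (hg : ∀ c, 0 < pCtx f P c → ∑ z, |PZ f P Pi c z - g c z| ≤ ε')
    {y : Fin (2*k+1) → ℝ} (hy : 0 < pFull f P y) :
    (∑ a, |postFull f P y a - postHat f P Pi g y a|) * pFull f P y
      ≤ ∑ a, ε' * Real.sqrt (∑ z, (Pi⁻¹ z a) ^ 2)
          * (pCtx f P (dropCenter k y) * f a (y (center k))) := by
  have hc := pCtx_pos_of_pFull_pos hf hP hy
  rw [Finset.sum_mul]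
  refine Finset.sum_le_sum fun a _ => ?_
  set w := pCtx f P (dropCenter k y) * f a (y (center k))
  have hw : 0 ≤ w := mul_nonneg hc.le (hf _ _)
  have hinner : |((PZ f P Pi (dropCenter k y) - g (dropCenter k y)) ᵥ* Pi⁻¹) a|
      ≤ ε' * Real.sqrt (∑ z, (Pi⁻¹ z a) ^ 2) :=
    (abs_sum_mul_le_sum_abs_mul_sqrt _ _).trans
      (mul_le_mul_of_nonneg_right (hg _ hc) (Real.sqrt_nonneg _))
  rw [postFull_sub_postHat hPi g hc.ne', abs_mul, abs_of_nonneg (div_nonneg hw hy.le)]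
  calc w / pFull f P y * |((PZ f P Pi (dropCenter k y) - g (dropCenter k y)) ᵥ* Pi⁻¹) a|
        * pFull f P y
      = w * |((PZ f P Pi (dropCenter k y) - g (dropCenter k y)) ᵥ* Pi⁻¹) a| := by
        field_simp
    _ ≤ w * (ε' * Real.sqrt (∑ z, (Pi⁻¹ z a) ^ 2)) := by gcongr
    _ = _ := mul_comm _ _

end Posterior

theorem statement3_general
    (M k : ℕ)
    (f : Fin M → ℝ → ℝ) (hf_meas : ∀ a, Measurable (f a))
    (hf_nonneg : ∀ a t, 0 ≤ f a t) (hf_int : ∀ a, ∫ t, f a t = 1)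
    (Pi : Matrix (Fin M) (Fin M) ℝ)
    (hPi_inv : IsUnit Pi.det)
    (P : (Fin (2*k+1) → Fin M) → ℝ)
    (hP_nonneg : ∀ u, 0 ≤ P u) (hP_sum : ∑ u, P u = 1)
    (g : (Fin (2*k) → ℝ) → Fin M → ℝ)
    (ε' : ℝ) (hε' : 0 < ε')
    (hg_approx : ∀ c : Fin (2*k) → ℝ, 0 < pCtx f P c →
      ∑ z, |PZ f P Pi c z - g c z| ≤ ε') :
    ∫ y in {y : Fin (2*k+1) → ℝ | 0 < pFull f P y},
        (∑ a, |postFull f P y a - postHat f P Pi g y a|) * pFull f P y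
      ≤ ε' * ∑ a, Real.sqrt (∑ z, (Pi⁻¹ z a)^2) := by
  set G : (Fin (2*k+1) → ℝ) → ℝ := fun y => ∑ a, ε' * Real.sqrt (∑ z, (Pi⁻¹ z a) ^ 2)
    * (pCtx f P (dropCenter k y) * f a (y (center k)))
  have hG_int : Integrable G :=
    integrable_finsetSum _ fun a _ => (integrable_pCtx_mul hf_int a).const_mul _
  have hG_nonneg : ∀ y, 0 ≤ G y := fun y => Finset.sum_nonneg fun a _ => by
    have := pCtx_nonneg hf_nonneg hP_nonneg (dropCenter k y)
    have := hf_nonneg a (y (center k))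
    positivity
  have hS : MeasurableSet {y : Fin (2*k+1) → ℝ | 0 < pFull f P y} :=
    measurableSet_lt measurable_const (measurable_pFull hf_meas)
  calc _ ≤ ∫ y in {y : Fin (2*k+1) → ℝ | 0 < pFull f P y}, G y :=
        integral_mono_of_nonneg
          (ae_of_all _ fun y => mul_nonneg (Finset.sum_nonneg fun a _ => abs_nonneg _)
            (pFull_nonneg hf_nonneg hP_nonneg y))
          hG_int.restrict
          ((ae_restrict_iff' hS).2 (ae_of_all _ fun y hy =>
            sum_abs_postFull_sub_postHat_mul_le hf_nonneg hP_nonneg hPi_inv hg_approx hy))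
    _ ≤ ∫ y, G y := setIntegral_le_integral hG_int (ae_of_all _ hG_nonneg)
    _ = ε' * ∑ a, Real.sqrt (∑ z, (Pi⁻¹ z a) ^ 2) := by
        rw [integral_finsetSum _ fun a _ => (integrable_pCtx_mul hf_int a).const_mul _,
          Finset.mul_sum]
        simp_rw [integral_const_mul, integral_pCtx_mul hf_int hP_sum, mul_one]

/-- Lemma 2 of the paper: under Assumption 2,
`∫_{p(y)>0} ‖P(X_0|y) − P̂(X_0|y)‖₁ · p(y) dy ≤ ε* = ε′ · Σ_a ‖π_a^{-1}‖₂`. -/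
theorem statement3
    (M k : ℕ) (hM : 2 ≤ M) (hk : 1 ≤ k)
    (f : Fin M → ℝ → ℝ) (hf_meas : ∀ a, Measurable (f a))
    (hf_nonneg : ∀ a t, 0 ≤ f a t) (hf_int : ∀ a, ∫ t, f a t = 1)
    (Q : ℝ → Fin M) (hQ : Measurable Q)
    (Pi : Matrix (Fin M) (Fin M) ℝ)
    (hPi : ∀ a z, Pi a z = ∫ t in {s : ℝ | Q s = z}, f a t)
    (hPi_inv : IsUnit Pi.det)
    (P : (Fin (2*k+1) → Fin M) → ℝ)
    (hP_nonneg : ∀ u, 0 ≤ P u) (hP_sum : ∑ u, P u = 1)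
    (g : (Fin (2*k) → ℝ) → Fin M → ℝ) (hg_meas : Measurable g)
    (hg_simplex : ∀ c, (∀ z, 0 ≤ g c z) ∧ ∑ z, g c z = 1)
    (ε' : ℝ) (hε' : 0 < ε')
    (hg_approx : ∀ c : Fin (2*k) → ℝ, 0 < pCtx f P c →
      ∑ z, |PZ f P Pi c z - g c z| ≤ ε') :
    ∫ y in {y : Fin (2*k+1) → ℝ | 0 < pFull f P y},
        (∑ a, |postFull f P y a - postHat f P Pi g y a|) * pFull f P y
      ≤ ε' * ∑ a, Real.sqrt (∑ z, (Pi⁻¹ z a)^2) :=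
  statement3_general M k f hf_meas hf_nonneg hf_int Pi hPi_inv P hP_nonneg hP_sum g ε' hε' hg_approx

end GenCUDE
end
end

section
/- Let P ∈ ℝ^M be a probability vector (nonnegative entries summing to 1) and let v ∈ ℝ^M be an arbitrary vector. Let b_P = B(P) and b_v = B(v) be Bayes responses with respect to P and v respectively. Then Σ_{a∈A} P(a)·(Λ(a, b_v) − Λ(a, b_P)) ≤ Λ_max · ‖P − v‖₁. -/
open Finset

/-- `b` is a Bayes response with respect to (the not necessarily normalized vector) `v`:
it minimizes `x̂ ↦ Σ_x Λ(x,x̂) v(x)`. -/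
def IsBayes {M : ℕ} (Λ : Matrix (Fin M) (Fin M) ℝ) (v : Fin M → ℝ) (b : Fin M) : Prop :=
  ∀ c : Fin M, ∑ a, Λ a b * v a ≤ ∑ a, Λ a c * v a

/-- for a probability vector `P` and an arbitrary vector `v`, with Bayes
responses `b_P = B(P)` and `b_v = B(v)`,
`Σ_a P(a)(Λ(a,b_v) − Λ(a,b_P)) ≤ Λ_max ‖P − v‖₁`. -/
theorem statement5
    (M : ℕ) (hM : 1 ≤ M)
    (Λ : Matrix (Fin M) (Fin M) ℝ) (Λmax : ℝ) (hΛmax : 0 < Λmax)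
    (hΛ : ∀ a b, Λ a b ∈ Set.Icc 0 Λmax)
    (P : Fin M → ℝ) (hP_nonneg : ∀ a, 0 ≤ P a) (hP_sum : ∑ a, P a = 1)
    (v : Fin M → ℝ)
    (bP bv : Fin M) (hbP : IsBayes Λ P bP) (hbv : IsBayes Λ v bv) :
    ∑ a, P a * (Λ a bv - Λ a bP) ≤ Λmax * ∑ a, |P a - v a| := by
  have hterm : ∀ a : Fin M, (P a - v a) * (Λ a bv - Λ a bP) ≤ Λmax * |P a - v a| := by
    intro a
    calc (P a - v a) * (Λ a bv - Λ a bP) ≤ |(P a - v a) * (Λ a bv - Λ a bP)| := le_abs_self _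
    _ = |P a - v a| * |Λ a bv - Λ a bP| := abs_mul _ _
    _ ≤ |P a - v a| * Λmax := by
        apply mul_le_mul_of_nonneg_left _ (abs_nonneg _)
        rw [abs_sub_le_iff]
        constructor
        · linarith [(hΛ a bv).2, (hΛ a bP).1]
        · linarith [(hΛ a bP).2, (hΛ a bv).1]
    _ = Λmax * |P a - v a| := mul_comm _ _
  have h1 : ∑ a, (P a - v a) * (Λ a bv - Λ a bP) ≤ Λmax * ∑ a, |P a - v a| := by
    rw [Finset.mul_sum]
    exact Finset.sum_le_sum fun a _ => hterm a
  have h2 : ∑ a, Λ a bv * v a ≤ ∑ a, Λ a bP * v a := hbv bP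
  have h3 : ∑ a, Λ a bP * P a ≤ ∑ a, Λ a bv * P a := hbP bv
  have key : ∑ a, P a * (Λ a bv - Λ a bP) ≤ ∑ a, (P a - v a) * (Λ a bv - Λ a bP) := by
    have : ∑ a, (P a * (Λ a bv - Λ a bP) - (P a - v a) * (Λ a bv - Λ a bP)) ≤ 0 := by
      have : ∑ a, (P a * (Λ a bv - Λ a bP) - (P a - v a) * (Λ a bv - Λ a bP))
          = (∑ a, Λ a bv * v a) - ∑ a, Λ a bP * v a := by
        rw [← Finset.sum_sub_distrib]
        exact Finset.sum_congr rfl fun a _ => by ring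
      rw [this]
      linarith
    have := Finset.sum_sub_distrib (s := Finset.univ)
      (f := fun a => P a * (Λ a bv - Λ a bP)) (g := fun a => (P a - v a) * (Λ a bv - Λ a bP))
    linarith [this ▸ ‹∑ a, (P a * (Λ a bv - Λ a bP) - (P a - v a) * (Λ a bv - Λ a bP)) ≤ 0›]
  linarith
end

section
/- Assume ∫_{{y : p(y_{-k}^k) > 0}} ‖P(X_0 | y_{-k}^k) − P̂(X_0 | y_{-k}^k)‖₁ · p(y_{-k}^k) dy_{-k}^k ≤ ε*, and that P̂(X_0 | y_{-k}^k) has all entries in [0,1] whenever p(y_{-k}^k) > 0. Let ĥ and ĥ^δ be measurable rules ℝ^{2k+1} → A such that, whenever p(y_{-k}^k) > 0, ĥ(y_{-k}^k) is a Bayes response B(P̂(X_0 | y_{-k}^k)) and ĥ^δ(y_{-k}^k) is a Bayes response B(R_δ(P̂(X_0 | y_{-k}^k))). Then |R(ĥ) − R(ĥ^δ)| ≤ 2·Λ_max·(ε* + M·δ/4). -/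
open MeasureTheory Finset

noncomputable section
namespace GenCUDE

/-! The risk gap is the integral of `Σ_a (Λ(a, ĥ) − Λ(a, ĥ^δ)) p(a, y)`, i.e. of `p(y)` times the
posterior expected loss gap. For the true posterior `u`, a Bayes response `b` to `v` and a Bayes
response `b'` to `w`, that gap is at most `Λ_max (‖u − v‖₁ + ‖v − w‖₁)`: moving from `u` to `v`
costs `Λ_max ‖u − v‖₁`, the Bayes property of `b` makes the gap at `v` nonpositive, and comparing
`b'` at `w` costs `Λ_max ‖v − w‖₁` more in the other direction. With `v = P̂`, `w = R_δ(P̂)` and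
`‖P̂ − R_δ(P̂)‖₁ ≤ M δ / 2`, integrating against `p` gives `Λ_max (ε* + M δ / 2)`, which is at most
`2 Λ_max (ε* + M δ / 4)` because `ε* ≥ 0`. -/

lemma exists_nat_le_abs_sub_le_half {y : ℝ} {N : ℕ} (hy₀ : 0 ≤ y) (hyN : y ≤ N) :
    ∃ m : ℕ, m ≤ N ∧ |(m : ℝ) - y| ≤ 1 / 2 := by
  have hlow : (-1 : ℤ) < round y := by
    exact_mod_cast (by linarith [sub_half_lt_round y] : (-1 : ℝ) < round y)
  have hup : round y < (N : ℤ) + 1 := by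
    exact_mod_cast (by linarith [round_le_add_half y] : (round y : ℝ) < N + 1)
  lift round y to ℕ using (by omega) with m hm
  refine ⟨m, by omega, ?_⟩
  rw [abs_sub_comm]
  exact_mod_cast hm ▸ abs_sub_round y

lemma abs_sub_le_of_forall_abs_sub_grid_le {N : ℕ} (hN : 0 < N) {x r : ℝ}
    (hx : x ∈ Set.Icc (0 : ℝ) 1) (hr : ∀ m : ℕ, m ≤ N → |r - x| ≤ |m * (1 / N : ℝ) - x|) :
    |r - x| ≤ 1 / N / 2 := by
  have hN' : (0 : ℝ) < N := by exact_mod_cast hN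
  obtain ⟨m, hmN, hm⟩ :=
    exists_nat_le_abs_sub_le_half (y := N * x) (by nlinarith [hx.1]) (by nlinarith [hx.2])
  calc |r - x| ≤ |m * (1 / N : ℝ) - x| := hr m hmN
    _ = |(m : ℝ) - N * x| / N := by
      rw [← abs_of_pos hN', ← abs_div, abs_of_pos hN']
      congr 1
      field_simp
    _ ≤ 1 / 2 / N := by gcongr
    _ = 1 / N / 2 := by ring

lemma sum_abs_sub_le_of_forall_abs_sub_grid_le {ι : Type*} [Fintype ι] {N : ℕ} (hN : 0 < N)
    {v r : ι → ℝ} (hv : ∀ i, v i ∈ Set.Icc (0 : ℝ) 1)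
    (hr : ∀ i, ∀ m : ℕ, m ≤ N → |r i - v i| ≤ |m * (1 / N : ℝ) - v i|) :
    ∑ i, |v i - r i| ≤ Fintype.card ι * (1 / N : ℝ) / 2 := by
  calc ∑ i, |v i - r i| ≤ ∑ _i : ι, (1 / N : ℝ) / 2 := sum_le_sum fun i _ => by
        rw [abs_sub_comm]
        exact abs_sub_le_of_forall_abs_sub_grid_le hN (hv i) (hr i)
    _ = Fintype.card ι * (1 / N : ℝ) / 2 := by simp only [sum_const, card_univ, nsmul_eq_mul]; ring

section Bayes

variable {M : ℕ} {Λ : Matrix (Fin M) (Fin M) ℝ} {Λmax : ℝ}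

lemma sum_loss_sub_mul_le (hΛ : ∀ a b, Λ a b ∈ Set.Icc 0 Λmax) (c c' : Fin M)
    (x : Fin M → ℝ) : ∑ a, (Λ a c - Λ a c') * x a ≤ Λmax * ∑ a, |x a| := by
  rw [mul_sum]
  refine sum_le_sum fun a _ => ?_
  have hgap : |Λ a c - Λ a c'| ≤ Λmax :=
    abs_sub_le_of_nonneg_of_le (hΛ a c).1 (hΛ a c).2 (hΛ a c').1 (hΛ a c').2
  calc (Λ a c - Λ a c') * x a ≤ |Λ a c - Λ a c'| * |x a| := (le_abs_self _).trans (abs_mul _ _).le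
    _ ≤ Λmax * |x a| := mul_le_mul_of_nonneg_right hgap (abs_nonneg _)

lemma abs_sum_loss_sub_mul_le_of_isBayes (hΛ : ∀ a b, Λ a b ∈ Set.Icc 0 Λmax)
    {u v w : Fin M → ℝ} {b b' : Fin M} (hb : IsBayes Λ v b) (hb' : IsBayes Λ w b') :
    |∑ a, (Λ a b - Λ a b') * u a| ≤ Λmax * ∑ a, |u a - v a| + Λmax * ∑ a, |v a - w a| := by
  have hvw : 0 ≤ Λmax * ∑ a, |v a - w a| := by
    rw [mul_sum]
    exact sum_nonneg fun a _ => mul_nonneg ((hΛ a a).1.trans (hΛ a a).2) (abs_nonneg _)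
  have huv := sum_loss_sub_mul_le hΛ b b' (u - v)
  have huv' := sum_loss_sub_mul_le hΛ b' b (u - v)
  have hvw' := sum_loss_sub_mul_le hΛ b' b (v - w)
  have hbv := hb b'
  have hbw := hb' b
  simp only [Pi.sub_apply, sub_mul, mul_sub, sum_sub_distrib] at huv huv' hvw' ⊢
  rw [abs_le]
  constructor <;> linarith

end Bayes

section ProductDensity

variable {ι α : Type*} [Fintype ι] {f : α → ℝ → ℝ}

lemma integrable_prod_density_s10 (hf : ∀ a, ∫ t, f a t = 1) (u : ι → α) :
    Integrable fun y : ι → ℝ => ∏ j, f (u j) (y j) :=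
  Integrable.fintype_prod fun _ => Integrable.of_integral_ne_zero (by simp [hf])

lemma integral_prod_density_s10 (hf : ∀ a, ∫ t, f a t = 1) (u : ι → α) :
    ∫ y : ι → ℝ, ∏ j, f (u j) (y j) = 1 := by
  simp [integral_fintype_prod_volume_eq_prod, hf]

end ProductDensity

lemma _root_.MeasureTheory.Integrable.finite_comp_mul {X β : Type*} [MeasurableSpace X]
    {μ : Measure X} [Finite β] [MeasurableSpace β] [DiscreteMeasurableSpace β] {φ : X → ℝ}
    (hφ : Integrable φ μ) (c : β → ℝ) {h : X → β} (hh : Measurable h) : Integrable (fun x => c (h x) * φ x) μ := by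
  obtain ⟨C, hC⟩ := (Set.finite_range fun b => ‖c b‖).bddAbove
  exact hφ.bdd_mul (Measurable.of_discrete.comp hh).aestronglyMeasurable
    (ae_of_all _ fun x => hC ⟨h x, rfl⟩)

section Window

variable {M k : ℕ} {f : Fin M → ℝ → ℝ} {P : (Fin (2*k+1) → Fin M) → ℝ}

lemma pJoint_nonneg (hf : ∀ a t, 0 ≤ f a t) (hP : ∀ u, 0 ≤ P u) (a : Fin M)
    (y : Fin (2*k+1) → ℝ) : 0 ≤ pJoint f P a y :=
  sum_nonneg fun u _ => by
    split_ifs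
    exacts [mul_nonneg (hP u) (prod_nonneg fun _ _ => hf _ _), le_rfl]

lemma pJoint_le_pFull (hf : ∀ a t, 0 ≤ f a t) (hP : ∀ u, 0 ≤ P u) (a : Fin M)
    (y : Fin (2*k+1) → ℝ) : pJoint f P a y ≤ pFull f P y :=
  sum_le_sum fun u _ => by
    split_ifs
    exacts [le_rfl, mul_nonneg (hP u) (prod_nonneg fun _ _ => hf _ _)]

lemma pFull_mul_postFull (hf : ∀ a t, 0 ≤ f a t) (hP : ∀ u, 0 ≤ P u)
    (y : Fin (2*k+1) → ℝ) (a : Fin M) : pFull f P y * postFull f P y a = pJoint f P a y := by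
  rcases (pFull_nonneg hf hP y).eq_or_lt with h | h
  -- here `postFull` is the junk value `pJoint / 0 = 0`, and `0 ≤ pJoint ≤ pFull = 0`
  · have := pJoint_le_pFull hf hP a y
    have := pJoint_nonneg hf hP a y
    rw [← h, zero_mul]
    linarith
  · exact mul_div_cancel₀ _ h.ne'

lemma postFull_mem_Icc (hf : ∀ a t, 0 ≤ f a t) (hP : ∀ u, 0 ≤ P u) {y : Fin (2*k+1) → ℝ}
    (hy : 0 < pFull f P y) (a : Fin M) : postFull f P y a ∈ Set.Icc (0 : ℝ) 1 :=
  ⟨div_nonneg (pJoint_nonneg hf hP a y) hy.le, (div_le_one hy).2 (pJoint_le_pFull hf hP a y)⟩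

lemma measurable_pJoint (hf : ∀ a, Measurable (f a)) (a : Fin M) :
    Measurable (pJoint f P a) := by
  unfold pJoint
  refine Finset.measurable_sum _ fun u _ => ?_
  split_ifs <;> fun_prop

lemma measurable_postFull (hf : ∀ a, Measurable (f a)) (a : Fin M) :
    Measurable fun y => postFull f P y a :=
  (measurable_pJoint hf a).div (measurable_pFull hf)

lemma measurable_postHat (hf : ∀ a, Measurable (f a)) {Pi : Matrix (Fin M) (Fin M) ℝ}
    {g : (Fin (2*k) → ℝ) → Fin M → ℝ} (hg : Measurable g) (a : Fin M) :
    Measurable fun y => postHat f P Pi g y a := by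
  unfold postHat pCtx dropCenter pFull
  fun_prop

lemma integrable_pFull (hf : ∀ a, ∫ t, f a t = 1) : Integrable (pFull f P) :=
  integrable_finsetSum _ fun u _ => (integrable_prod_density_s10 hf u).const_mul (P u)

lemma integral_pFull (hf : ∀ a, ∫ t, f a t = 1) (hP : ∑ u, P u = 1) :
    ∫ y, pFull f P y = 1 := by
  unfold pFull
  rw [integral_finsetSum _ fun u _ => (integrable_prod_density_s10 hf u).const_mul (P u)]
  simpa [integral_const_mul, integral_prod_density_s10 hf] using hP

lemma setIntegral_pFull_pos_eq_integral (hf : ∀ a t, 0 ≤ f a t) (hP : ∀ u, 0 ≤ P u)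
    (φ : (Fin (2*k+1) → ℝ) → ℝ) :
    ∫ y in {y | 0 < pFull f P y}, φ y * pFull f P y = ∫ y, φ y * pFull f P y := by
  refine setIntegral_eq_integral_of_forall_compl_eq_zero fun y hy => ?_
  rw [le_antisymm (not_lt.1 hy) (pFull_nonneg hf hP y), mul_zero]

lemma integrable_sum_abs_postFull_sub_mul_pFull (hf_meas : ∀ a, Measurable (f a))
    (hf_nonneg : ∀ a t, 0 ≤ f a t) (hf_int : ∀ a, ∫ t, f a t = 1) (hP : ∀ u, 0 ≤ P u)
    {v : (Fin (2*k+1) → ℝ) → Fin M → ℝ} (hv_meas : ∀ a, Measurable fun y => v y a)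
    (hv : ∀ y, 0 < pFull f P y → ∀ a, v y a ∈ Set.Icc (0 : ℝ) 1) :
    Integrable fun y => (∑ a, |postFull f P y a - v y a|) * pFull f P y := by
  have hmeas : Measurable fun y => (∑ a, |postFull f P y a - v y a|) * pFull f P y := by
    have := measurable_postFull (P := P) hf_meas
    have := measurable_pFull (P := P) hf_meas
    fun_prop
  refine ((integrable_pFull (P := P) hf_int).const_mul M).mono' hmeas.aestronglyMeasurable
    (ae_of_all _ fun y => ?_)
  rcases (pFull_nonneg hf_nonneg hP y).eq_or_lt with h | h
  · simp [← h]
  have hsum : ∑ a, |postFull f P y a - v y a| ≤ M := by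
    calc ∑ a, |postFull f P y a - v y a| ≤ ∑ _a : Fin M, (1 : ℝ) := sum_le_sum fun a _ =>
          abs_sub_le_of_nonneg_of_le (postFull_mem_Icc hf_nonneg hP h a).1
            (postFull_mem_Icc hf_nonneg hP h a).2 (hv y h a).1 (hv y h a).2
      _ = M := by simp
  rw [Real.norm_eq_abs, abs_of_nonneg (by positivity)]
  exact mul_le_mul_of_nonneg_right hsum h.le

lemma sum_loss_mul_pJoint (Λ : Matrix (Fin M) (Fin M) ℝ) (b : Fin M) (y : Fin (2*k+1) → ℝ) :
    ∑ a, Λ a b * pJoint f P a y = ∑ u, P u * (Λ (u (center k)) b * ∏ j, f (u j) (y j)) := by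
  simp only [pJoint, mul_sum, mul_ite, mul_zero]
  rw [sum_comm]
  refine sum_congr rfl fun u _ => ?_
  rw [sum_ite_eq]
  simp only [mem_univ, if_true]
  ring

variable {Λ : Matrix (Fin M) (Fin M) ℝ} {h : (Fin (2*k+1) → ℝ) → Fin M}

lemma integrable_sum_loss_mul_pJoint (hf : ∀ a, ∫ t, f a t = 1) (hh : Measurable h) :
    Integrable fun y => ∑ a, Λ a (h y) * pJoint f P a y := by
  simp_rw [sum_loss_mul_pJoint]
  exact integrable_finsetSum _ fun u _ =>
    ((integrable_prod_density_s10 hf u).finite_comp_mul (Λ (u (center k))) hh).const_mul (P u)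

lemma risk_eq_integral (hf : ∀ a, ∫ t, f a t = 1) (hh : Measurable h) :
    risk f P Λ h = ∫ y, ∑ a, Λ a (h y) * pJoint f P a y := by
  simp_rw [sum_loss_mul_pJoint]
  rw [integral_finsetSum _ fun u _ =>
    ((integrable_prod_density_s10 hf u).finite_comp_mul (Λ (u (center k))) hh).const_mul (P u)]
  simp only [integral_const_mul, risk]

lemma risk_sub_risk_eq_integral (hf_nonneg : ∀ a t, 0 ≤ f a t) (hf_int : ∀ a, ∫ t, f a t = 1)
    (hP : ∀ u, 0 ≤ P u) {h' : (Fin (2*k+1) → ℝ) → Fin M} (hh : Measurable h)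
    (hh' : Measurable h') : risk f P Λ h - risk f P Λ h' =
      ∫ y, pFull f P y * ∑ a, (Λ a (h y) - Λ a (h' y)) * postFull f P y a := by
  rw [risk_eq_integral hf_int hh, risk_eq_integral hf_int hh', ← integral_sub
    (integrable_sum_loss_mul_pJoint hf_int hh) (integrable_sum_loss_mul_pJoint hf_int hh')]
  congr 1 with y
  simp only [mul_sum, ← sum_sub_distrib, ← pFull_mul_postFull hf_nonneg hP y]
  exact sum_congr rfl fun a _ => by ring

variable {Λmax : ℝ} {h' : (Fin (2*k+1) → ℝ) → Fin M} {v w : (Fin (2*k+1) → ℝ) → Fin M → ℝ}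
  {C : ℝ}

lemma abs_pFull_mul_sum_loss_sub_le (hf : ∀ a t, 0 ≤ f a t) (hP : ∀ u, 0 ≤ P u)
    (hΛmax : 0 ≤ Λmax) (hΛ : ∀ a b, Λ a b ∈ Set.Icc 0 Λmax)
    (hvw : ∀ y, 0 < pFull f P y → ∑ a, |v y a - w y a| ≤ C)
    (hb : ∀ y, 0 < pFull f P y → IsBayes Λ (v y) (h y))
    (hb' : ∀ y, 0 < pFull f P y → IsBayes Λ (w y) (h' y)) (y : Fin (2*k+1) → ℝ) :
    |pFull f P y * ∑ a, (Λ a (h y) - Λ a (h' y)) * postFull f P y a| ≤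
      Λmax * ((∑ a, |postFull f P y a - v y a|) * pFull f P y) + Λmax * C * pFull f P y := by
  rcases (pFull_nonneg hf hP y).eq_or_lt with h0 | hpos
  · simp [← h0]
  have hgap := abs_sum_loss_sub_mul_le_of_isBayes hΛ (u := postFull f P y) (hb y hpos) (hb' y hpos)
  have := mul_le_mul_of_nonneg_left (hvw y hpos) hΛmax
  rw [abs_mul, abs_of_pos hpos]
  calc _ ≤ pFull f P y * (Λmax * ∑ a, |postFull f P y a - v y a| + Λmax * C) :=
      mul_le_mul_of_nonneg_left (hgap.trans (by linarith)) hpos.le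
    _ = _ := by ring

lemma abs_risk_sub_risk_le (hf_meas : ∀ a, Measurable (f a)) (hf_nonneg : ∀ a t, 0 ≤ f a t)
    (hf_int : ∀ a, ∫ t, f a t = 1) (hP : ∀ u, 0 ≤ P u) (hP_sum : ∑ u, P u = 1)
    (hΛmax : 0 ≤ Λmax) (hΛ : ∀ a b, Λ a b ∈ Set.Icc 0 Λmax)
    (hv_meas : ∀ a, Measurable fun y => v y a)
    (hv : ∀ y, 0 < pFull f P y → ∀ a, v y a ∈ Set.Icc (0 : ℝ) 1)
    (hvw : ∀ y, 0 < pFull f P y → ∑ a, |v y a - w y a| ≤ C)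
    (hh : Measurable h) (hh' : Measurable h')
    (hb : ∀ y, 0 < pFull f P y → IsBayes Λ (v y) (h y))
    (hb' : ∀ y, 0 < pFull f P y → IsBayes Λ (w y) (h' y)) :
    |risk f P Λ h - risk f P Λ h'| ≤
      Λmax * (∫ y, (∑ a, |postFull f P y a - v y a|) * pFull f P y) + Λmax * C := by
  have herr := integrable_sum_abs_postFull_sub_mul_pFull hf_meas hf_nonneg hf_int hP hv_meas hv
  have hbound := (herr.const_mul Λmax).add ((integrable_pFull (P := P) hf_int).const_mul (Λmax * C))
  calc |risk f P Λ h - risk f P Λ h'|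
      ≤ ∫ y, (Λmax * ((∑ a, |postFull f P y a - v y a|) * pFull f P y)
          + Λmax * C * pFull f P y) := by
        rw [risk_sub_risk_eq_integral hf_nonneg hf_int hP hh hh']
        exact norm_integral_le_of_norm_le hbound <| ae_of_all _ fun y =>
          (Real.norm_eq_abs _).trans_le
            (abs_pFull_mul_sum_loss_sub_le hf_nonneg hP hΛmax hΛ hvw hb hb' y)
    _ = _ := by
        rw [integral_add (herr.const_mul Λmax) ((integrable_pFull hf_int).const_mul _),
          integral_const_mul, integral_const_mul, integral_pFull hf_int hP_sum, mul_one]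

end Window

theorem statement10_general
    (M k : ℕ)
    (f : Fin M → ℝ → ℝ) (hf_meas : ∀ a, Measurable (f a))
    (hf_nonneg : ∀ a t, 0 ≤ f a t) (hf_int : ∀ a, ∫ t, f a t = 1)
    (Pi : Matrix (Fin M) (Fin M) ℝ)
    (Λ : Matrix (Fin M) (Fin M) ℝ) (Λmax : ℝ) (hΛmax : 0 < Λmax)
    (hΛ : ∀ a b, Λ a b ∈ Set.Icc 0 Λmax)
    (P : (Fin (2*k+1) → Fin M) → ℝ)
    (hP_nonneg : ∀ u, 0 ≤ P u) (hP_sum : ∑ u, P u = 1)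
    (g : (Fin (2*k) → ℝ) → Fin M → ℝ) (hg_meas : Measurable g)
    (εstar : ℝ)
    (happrox : ∫ y in {y : Fin (2*k+1) → ℝ | 0 < pFull f P y},
        (∑ a, |postFull f P y a - postHat f P Pi g y a|) * pFull f P y ≤ εstar)
    (hhat_range : ∀ y : Fin (2*k+1) → ℝ, 0 < pFull f P y →
      ∀ a, postHat f P Pi g y a ∈ Set.Icc (0:ℝ) 1)
    (N : ℕ) (hN : 0 < N) (δ : ℝ) (hδ : δ = 1 / N)
    (Rδ : (Fin M → ℝ) → (Fin M → ℝ))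
    (hR_near : ∀ v : Fin M → ℝ, (∀ i, v i ∈ Set.Icc (0:ℝ) 1) →
      ∀ i, ∀ m : ℕ, m ≤ N → |Rδ v i - v i| ≤ |m * δ - v i|)
    (hhat hhatδ : (Fin (2*k+1) → ℝ) → Fin M)
    (hhat_meas : Measurable hhat) (hhatδ_meas : Measurable hhatδ)
    (hhat_bayes : ∀ y : Fin (2*k+1) → ℝ, 0 < pFull f P y →
      IsBayes Λ (postHat f P Pi g y) (hhat y))
    (hhatδ_bayes : ∀ y : Fin (2*k+1) → ℝ, 0 < pFull f P y →
      IsBayes Λ (Rδ (postHat f P Pi g y)) (hhatδ y)) :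
    |risk f P Λ hhat - risk f P Λ hhatδ| ≤ 2 * Λmax * (εstar + M * δ / 4) := by
  subst hδ
  rw [setIntegral_pFull_pos_eq_integral hf_nonneg hP_nonneg] at happrox
  have hround (y) (hy : 0 < pFull f P y) :
      ∑ a, |postHat f P Pi g y a - Rδ (postHat f P Pi g y) a| ≤ M * (1 / N : ℝ) / 2 := by
    simpa only [Fintype.card_fin] using
      sum_abs_sub_le_of_forall_abs_sub_grid_le hN (hhat_range y hy) (hR_near _ (hhat_range y hy))
  have hε : 0 ≤ εstar := (integral_nonneg fun y => mul_nonneg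
    (sum_nonneg fun a _ => abs_nonneg _) (pFull_nonneg hf_nonneg hP_nonneg y)).trans happrox
  have hrisk := abs_risk_sub_risk_le hf_meas hf_nonneg hf_int hP_nonneg hP_sum hΛmax.le hΛ
    (measurable_postHat hf_meas hg_meas) hhat_range hround hhat_meas hhatδ_meas hhat_bayes
    hhatδ_bayes
  nlinarith [mul_le_mul_of_nonneg_left happrox hΛmax.le]

/-- Lemma 5 of the paper: if the weighted `L¹` posterior-approximation
error is at most `ε*`, the approximate posterior has entries in `[0,1]`, and `ĥ`, `ĥ^δ`
are measurable Bayes-response rules for `P̂` and for its quantization `R_δ(P̂)` respectively,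
then `|R(ĥ) − R(ĥ^δ)| ≤ 2 Λ_max (ε* + M δ / 4)`. -/
theorem statement10
    (M k : ℕ) (hM : 2 ≤ M) (hk : 1 ≤ k)
    (f : Fin M → ℝ → ℝ) (hf_meas : ∀ a, Measurable (f a))
    (hf_nonneg : ∀ a t, 0 ≤ f a t) (hf_int : ∀ a, ∫ t, f a t = 1)
    (Q : ℝ → Fin M) (hQ : Measurable Q)
    (Pi : Matrix (Fin M) (Fin M) ℝ)
    (hPi : ∀ a z, Pi a z = ∫ t in {s : ℝ | Q s = z}, f a t)
    (hPi_inv : IsUnit Pi.det)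
    (Λ : Matrix (Fin M) (Fin M) ℝ) (Λmax : ℝ) (hΛmax : 0 < Λmax)
    (hΛ : ∀ a b, Λ a b ∈ Set.Icc 0 Λmax)
    (P : (Fin (2*k+1) → Fin M) → ℝ)
    (hP_nonneg : ∀ u, 0 ≤ P u) (hP_sum : ∑ u, P u = 1)
    (g : (Fin (2*k) → ℝ) → Fin M → ℝ) (hg_meas : Measurable g)
    (hg_simplex : ∀ c, (∀ z, 0 ≤ g c z) ∧ ∑ z, g c z = 1)
    (εstar : ℝ)
    (happrox : ∫ y in {y : Fin (2*k+1) → ℝ | 0 < pFull f P y},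
        (∑ a, |postFull f P y a - postHat f P Pi g y a|) * pFull f P y ≤ εstar)
    (hhat_range : ∀ y : Fin (2*k+1) → ℝ, 0 < pFull f P y →
      ∀ a, postHat f P Pi g y a ∈ Set.Icc (0:ℝ) 1)
    (N : ℕ) (hN : 0 < N) (δ : ℝ) (hδ : δ = 1 / N)
    (Rδ : (Fin M → ℝ) → (Fin M → ℝ))
    (hR_grid : ∀ v : Fin M → ℝ, (∀ i, v i ∈ Set.Icc (0:ℝ) 1) →
      ∀ i, ∃ m : ℕ, m ≤ N ∧ Rδ v i = m * δ)
    (hR_near : ∀ v : Fin M → ℝ, (∀ i, v i ∈ Set.Icc (0:ℝ) 1) →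
      ∀ i, ∀ m : ℕ, m ≤ N → |Rδ v i - v i| ≤ |m * δ - v i|)
    (hhat hhatδ : (Fin (2*k+1) → ℝ) → Fin M)
    (hhat_meas : Measurable hhat) (hhatδ_meas : Measurable hhatδ)
    (hhat_bayes : ∀ y : Fin (2*k+1) → ℝ, 0 < pFull f P y →
      IsBayes Λ (postHat f P Pi g y) (hhat y))
    (hhatδ_bayes : ∀ y : Fin (2*k+1) → ℝ, 0 < pFull f P y →
      IsBayes Λ (Rδ (postHat f P Pi g y)) (hhatδ y)) :
    |risk f P Λ hhat - risk f P Λ hhatδ| ≤ 2 * Λmax * (εstar + M * δ / 4) :=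
  statement10_general M k f hf_meas hf_nonneg hf_int Pi Λ Λmax hΛmax hΛ P hP_nonneg hP_sum g hg_meas
    εstar happrox hhat_range N hN δ hδ Rδ hR_near hhat hhatδ hhat_meas hhatδ_meas hhat_bayes
    hhatδ_bayes

end GenCUDE
end
end
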